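/- arXiv:2210.14092 — 2 statements merged into one kernel-verified Lean document; each statement's English description precedes it below -/
import Mathlib

section
/- Let X̃₁ and X̃₂ be fuzzy incidence graphs such that there exists an edge a₁a₂ ∈ E₁ whose pair weights satisfy η₁(a₁,a₁a₂) ≥ ε₂(v) and η₁(a₂,a₁a₂) ≥ ε₂(v) for some vertex v ∈ V₂. Then in the Cartesian product X̃₁ × X̃₂ the pairs ((a₁,v),(a₁,v)(a₂,v)) and ((a₂,v),(a₁,v)(a₂,v)) are strong pairs. -/
open scoped BigOperators

/-- A fuzzy incidence graph on a finite vertex type `V`.  An (undirected, loopless) edge `xy`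
is encoded by the symmetric membership function `rho`, and the incidence pair `(x, xy)`
is encoded by `eta x y` (so `eta x y` is the membership value of the pair consisting of the
vertex `x` and the edge joining `x` and `y`). All membership values lie in `[0,1]`,
`rho xy ≤ min (eps x) (eps y)` and `eta (x, xy) ≤ min (eps x) (rho xy)`. -/
structure FIG (V : Type) [Fintype V] [DecidableEq V] where
  eps : V → ℝ
  rho : V → V → ℝ
  eta : V → V → ℝ
  eps_nonneg : ∀ x, 0 ≤ eps x
  eps_le_one : ∀ x, eps x ≤ 1
  rho_nonneg : ∀ x y, 0 ≤ rho x y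
  rho_symm : ∀ x y, rho x y = rho y x
  rho_le : ∀ x y, rho x y ≤ min (eps x) (eps y)
  rho_irrefl : ∀ x, rho x x = 0
  eta_nonneg : ∀ x y, 0 ≤ eta x y
  eta_le : ∀ x y, eta x y ≤ min (eps x) (rho x y)

namespace FIG

variable {V V₁ V₂ : Type} [Fintype V] [DecidableEq V]
  [Fintype V₁] [DecidableEq V₁] [Fintype V₂] [DecidableEq V₂]

/-- `(x, xy)` is a pair of the fuzzy incidence graph (i.e. belongs to the support `η*`). -/
def IsPair (G : FIG V) (x y : V) : Prop := 0 < G.eta x y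

/-- the minimum of the two pair weights along one edge step of an incidence path -/
def pairMin (G : FIG V) (a b : V) : ℝ := min (G.eta a b) (G.eta b a)

/-- the minimum of the pair weights along the internal steps of a vertex list -/
def chainStrength (G : FIG V) : List V → ℝ
  | [] => 1
  | [_] => 1
  | a :: b :: l => min (G.pairMin a b) (G.chainStrength (b :: l))

/-- The set of incidence strengths of incidence paths from the vertex `x` to the edge `yz`:
a path is recorded by its (pairwise distinct) sequence of vertices, starting at `x` and ending
at an endpoint of the edge `yz`; its strength is the minimum of the weights of its pairs
(pairs of weight `0` are not genuine pairs, but a list using them has strength `0`, so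
including such lists does not alter the supremum below). -/
def pathStrengths (G : FIG V) (x y z : V) : Set ℝ :=
  {s | ∃ l : List V, l.Nodup ∧ l.head? = some x ∧
      ((l.getLast? = some y ∧ s = min (G.chainStrength l) (G.eta y z)) ∨
       (l.getLast? = some z ∧ s = min (G.chainStrength l) (G.eta z y)))}

/-- `ICONN G x y z` is the greatest incidence strength of an incidence path from the
vertex `x` to the edge `yz` (the incidence connectivity `ICONN_G (x, yz)`). -/
noncomputable def ICONN (G : FIG V) (x y z : V) : ℝ := sSup (G.pathStrengths x y z)

/-- the fuzzy incidence graph obtained by deleting the pair `(a, ab)` -/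
def deletePair (G : FIG V) (a b : V) : FIG V where
  eps := G.eps
  rho := G.rho
  eta := fun u v => if u = a ∧ v = b then 0 else G.eta u v
  eps_nonneg := G.eps_nonneg
  eps_le_one := G.eps_le_one
  rho_nonneg := G.rho_nonneg
  rho_symm := G.rho_symm
  rho_le := G.rho_le
  rho_irrefl := G.rho_irrefl
  eta_nonneg := by
    intro u v; split
    · exact le_refl 0
    · exact G.eta_nonneg u v
  eta_le := by
    intro u v; split
    · exact le_min (G.eps_nonneg u) (G.rho_nonneg u v)
    · exact G.eta_le u v

/-- The pair `(x, xy)` is strong: its weight is at least the incidence connectivity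
between `x` and the edge `xy` in the graph obtained by deleting the pair `(x, xy)`. -/
def IsStrongPair (G : FIG V) (x y : V) : Prop :=
  (G.deletePair x y).ICONN x x y ≤ G.eta x y

/-- a strong fuzzy incidence graph: every pair is strong -/
def Strong (G : FIG V) : Prop := ∀ x y, G.IsPair x y → G.IsStrongPair x y

/-- The pair `(x, xy)` is effective: `η(x, xy) = min (ε x) (ρ xy)`. -/
def EffectivePair (G : FIG V) (x y : V) : Prop :=
  G.eta x y = min (G.eps x) (G.rho x y)

/-- a fuzzy incidence graph in which every pair is effective -/
def EffectivePairs (G : FIG V) : Prop := ∀ x y, G.IsPair x y → G.EffectivePair x y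

/-- The Cartesian product of two fuzzy incidence graphs: `(a₁,b₁)(a₂,b₂)` is an edge
when `a₁ = a₂` and `b₁b₂ ∈ E₂`, or `b₁ = b₂` and `a₁a₂ ∈ E₁`; a pair of the product
exists when both corresponding pairs of the factor exist. -/
noncomputable def cartesian (G₁ : FIG V₁) (G₂ : FIG V₂) : FIG (V₁ × V₂) where
  eps := fun p => min (G₁.eps p.1) (G₂.eps p.2)
  rho := fun p q =>
    if p.1 = q.1 then min (G₁.eps p.1) (G₂.rho p.2 q.2)
    else if p.2 = q.2 then min (G₁.rho p.1 q.1) (G₂.eps p.2)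
    else 0
  eta := fun p q =>
    if p.1 = q.1 then
      (if 0 < G₂.eta p.2 q.2 ∧ 0 < G₂.eta q.2 p.2 then
        min (G₁.eps p.1) (G₂.eta p.2 q.2) else 0)
    else if p.2 = q.2 then
      (if 0 < G₁.eta p.1 q.1 ∧ 0 < G₁.eta q.1 p.1 then
        min (G₁.eta p.1 q.1) (G₂.eps p.2) else 0)
    else 0
  eps_nonneg := fun p => le_min (G₁.eps_nonneg p.1) (G₂.eps_nonneg p.2)
  eps_le_one := fun p => min_le_of_left_le (G₁.eps_le_one p.1)
  rho_nonneg := by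
    intro p q; split
    · exact le_min (G₁.eps_nonneg _) (G₂.rho_nonneg _ _)
    · split
      · exact le_min (G₁.rho_nonneg _ _) (G₂.eps_nonneg _)
      · exact le_refl 0
  rho_symm := by
    intro p q
    by_cases h1 : p.1 = q.1
    · simp [h1, G₂.rho_symm p.2 q.2]
    · by_cases h2 : p.2 = q.2
      · simp [h1, Ne.symm h1, h2, G₁.rho_symm p.1 q.1]
      · simp [h1, Ne.symm h1, h2, Ne.symm h2]
  rho_le := by
    intro p q; split
    · rename_i h1
      refine le_min (le_min (min_le_left _ _) (min_le_of_right_le ?_))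
        (le_min (h1 ▸ min_le_left _ _) (min_le_of_right_le ?_))
      · exact le_trans (G₂.rho_le p.2 q.2) (min_le_left _ _)
      · exact le_trans (G₂.rho_le p.2 q.2) (min_le_right _ _)
    · split
      · rename_i h1 h2
        refine le_min (le_min (min_le_of_left_le ?_) (min_le_right _ _))
          (le_min (min_le_of_left_le ?_) (h2 ▸ min_le_right _ _))
        · exact le_trans (G₁.rho_le p.1 q.1) (min_le_left _ _)
        · exact le_trans (G₁.rho_le p.1 q.1) (min_le_right _ _)
      · exact le_min (le_min (G₁.eps_nonneg _) (G₂.eps_nonneg _))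
          (le_min (G₁.eps_nonneg _) (G₂.eps_nonneg _))
  rho_irrefl := by
    intro p
    rw [if_pos rfl, G₂.rho_irrefl]
    exact min_eq_right (G₁.eps_nonneg p.1)
  eta_nonneg := by
    intro p q; split
    · split
      · exact le_min (G₁.eps_nonneg _) (G₂.eta_nonneg _ _)
      · exact le_refl 0
    · split
      · split
        · exact le_min (G₁.eta_nonneg _ _) (G₂.eps_nonneg _)
        · exact le_refl 0
      · exact le_refl 0
  eta_le := by
    intro p q; split
    · split
      · refine le_min (le_min (min_le_left _ _) (min_le_of_right_le ?_))
          (le_min (min_le_left _ _) (min_le_of_right_le ?_))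
        · exact le_trans (G₂.eta_le p.2 q.2) (min_le_left _ _)
        · exact le_trans (G₂.eta_le p.2 q.2) (min_le_right _ _)
      · exact le_min (le_min (G₁.eps_nonneg _) (G₂.eps_nonneg _))
          (le_min (G₁.eps_nonneg _) (G₂.rho_nonneg _ _))
    · split
      · split
        · refine le_min (le_min (min_le_of_left_le ?_) (min_le_right _ _))
            (le_min (min_le_of_left_le ?_) (min_le_right _ _))
          · exact le_trans (G₁.eta_le p.1 q.1) (min_le_left _ _)
          · exact le_trans (G₁.eta_le p.1 q.1) (min_le_right _ _)
        · exact le_min (le_min (G₁.eps_nonneg _) (G₂.eps_nonneg _))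
            (le_min (G₁.rho_nonneg _ _) (G₂.eps_nonneg _))
      · exact le_min (le_min (G₁.eps_nonneg _) (G₂.eps_nonneg _)) (le_refl 0)

/-! An incidence path from `x` to the edge `xy` ends either with the pair `(x, xy)`, which has
weight `0` once deleted, or with the pair `(y, xy)`, which bounds its strength. Hence
`η(y, xy) ≤ η(x, xy)` already makes `(x, xy)` strong. On the edge `(a₁,v)(a₂,v)` of the product
the two pair weights are `min (η₁ (aᵢ, a₁a₂)) (ε₂ v) = ε₂ v` (or both `0`), so they coincide and
each of the two pairs is strong. -/

lemma deletePair_eta_self (G : FIG V) (a b : V) : (G.deletePair a b).eta a b = 0 :=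
  if_pos ⟨rfl, rfl⟩

lemma deletePair_eta_le (G : FIG V) (a b u w : V) : (G.deletePair a b).eta u w ≤ G.eta u w := by
  change ite _ _ _ ≤ _
  split
  · exact G.eta_nonneg u w
  · exact le_rfl

lemma isStrongPair_of_eta_le (G : FIG V) {x y : V} (h : G.eta y x ≤ G.eta x y) :
    G.IsStrongPair x y := by
  refine Real.sSup_le ?_ (G.eta_nonneg x y)
  rintro s ⟨l, -, -, ⟨-, rfl⟩ | ⟨-, rfl⟩⟩
  · calc min _ ((G.deletePair x y).eta x y) ≤ (G.deletePair x y).eta x y := min_le_right _ _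
      _ = 0 := G.deletePair_eta_self x y
      _ ≤ G.eta x y := G.eta_nonneg x y
  · calc min _ ((G.deletePair x y).eta y x) ≤ (G.deletePair x y).eta y x := min_le_right _ _
      _ ≤ G.eta y x := G.deletePair_eta_le x y y x
      _ ≤ G.eta x y := h

lemma cartesian_eta_of_fst_ne (G₁ : FIG V₁) (G₂ : FIG V₂) {a₁ a₂ : V₁} (hne : a₁ ≠ a₂)
    (v : V₂) :
    (G₁.cartesian G₂).eta (a₁, v) (a₂, v) =
      if 0 < G₁.eta a₁ a₂ ∧ 0 < G₁.eta a₂ a₁ then min (G₁.eta a₁ a₂) (G₂.eps v) else 0 := by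
  simp [cartesian, hne]

lemma cartesian_eta_comm_of_eps_le (G₁ : FIG V₁) (G₂ : FIG V₂) {a₁ a₂ : V₁} {v : V₂}
    (h₁ : G₂.eps v ≤ G₁.eta a₁ a₂) (h₂ : G₂.eps v ≤ G₁.eta a₂ a₁) :
    (G₁.cartesian G₂).eta (a₁, v) (a₂, v) = (G₁.cartesian G₂).eta (a₂, v) (a₁, v) := by
  obtain rfl | hne := eq_or_ne a₁ a₂
  · rfl
  rw [cartesian_eta_of_fst_ne G₁ G₂ hne, cartesian_eta_of_fst_ne G₁ G₂ hne.symm,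
    min_eq_right h₁, min_eq_right h₂]
  simp only [and_comm]

theorem cartesian_strongPair_of_eps_le_general (G₁ : FIG V₁) (G₂ : FIG V₂)
    (a₁ a₂ : V₁) (v : V₂)
    (h₁ : G₂.eps v ≤ G₁.eta a₁ a₂) (h₂ : G₂.eps v ≤ G₁.eta a₂ a₁) :
    (G₁.cartesian G₂).IsStrongPair (a₁, v) (a₂, v) ∧
      (G₁.cartesian G₂).IsStrongPair (a₂, v) (a₁, v) := by
  have heta := cartesian_eta_comm_of_eps_le G₁ G₂ h₁ h₂
  exact ⟨isStrongPair_of_eta_le _ heta.ge, isStrongPair_of_eta_le _ heta.le⟩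

/-- **Corollary 24.** If `a₁a₂` is an edge of `G₁` whose two pair weights are at least
`ε₂ v` for some vertex `v` of `G₂`, then in the Cartesian product the two pairs on the
edge `(a₁,v)(a₂,v)` are strong. -/
theorem cartesian_strongPair_of_eps_le (G₁ : FIG V₁) (G₂ : FIG V₂)
    (a₁ a₂ : V₁) (v : V₂) (he : 0 < G₁.rho a₁ a₂)
    (h₁ : G₂.eps v ≤ G₁.eta a₁ a₂) (h₂ : G₂.eps v ≤ G₁.eta a₂ a₁) :
    (G₁.cartesian G₂).IsStrongPair (a₁, v) (a₂, v) ∧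
      (G₁.cartesian G₂).IsStrongPair (a₂, v) (a₁, v) :=
  cartesian_strongPair_of_eps_le_general G₁ G₂ a₁ a₂ v h₁ h₂

end FIG
end

section
/- Let X̃₁ and X̃₂ be fuzzy incidence graphs. If the pairs (a₁,a₁a₂) and (a₂,a₁a₂) are effective pairs in X̃₁, then for any vertex v ∈ V₂, the pairs ((a₁,v),(a₁,v)(a₂,v)) and ((a₂,v),(a₁,v)(a₂,v)) are effective in the Cartesian product X̃ = X̃₁ × X̃₂. -/
open scoped BigOperators

namespace FIG

variable {V V₁ V₂ : Type} [Fintype V] [DecidableEq V]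
  [Fintype V₁] [DecidableEq V₁] [Fintype V₂] [DecidableEq V₂]

theorem IsPair.ne {G : FIG V} {x y : V} (h : G.IsPair x y) : x ≠ y := by
  rintro rfl
  have hle := G.eta_le x x
  rw [G.rho_irrefl] at hle
  exact (h.trans_le (hle.trans (min_le_right _ _))).false

section cartesian

variable (G₁ : FIG V₁) (G₂ : FIG V₂) {a₁ a₂ : V₁} (v : V₂)

theorem cartesian_eps_apply (a : V₁) :
    (G₁.cartesian G₂).eps (a, v) = min (G₁.eps a) (G₂.eps v) := rfl

theorem cartesian_rho_of_ne_fst (hne : a₁ ≠ a₂) :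
    (G₁.cartesian G₂).rho (a₁, v) (a₂, v) = min (G₁.rho a₁ a₂) (G₂.eps v) := by
  simp only [cartesian, if_neg hne, if_true]

theorem cartesian_eta_of_isPair (hp₁ : G₁.IsPair a₁ a₂) (hp₂ : G₁.IsPair a₂ a₁) :
    (G₁.cartesian G₂).eta (a₁, v) (a₂, v) = min (G₁.eta a₁ a₂) (G₂.eps v) := by
  simp only [cartesian, if_neg hp₁.ne, if_true]
  exact if_pos ⟨hp₁, hp₂⟩

end cartesian

theorem EffectivePair.cartesian {G₁ : FIG V₁} {a₁ a₂ : V₁} (G₂ : FIG V₂) (v : V₂)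
    (h : G₁.EffectivePair a₁ a₂) (hp₁ : G₁.IsPair a₁ a₂) (hp₂ : G₁.IsPair a₂ a₁) :
    (G₁.cartesian G₂).EffectivePair (a₁, v) (a₂, v) := by
  rw [EffectivePair, cartesian_eta_of_isPair G₁ G₂ v hp₁ hp₂, cartesian_eps_apply,
    cartesian_rho_of_ne_fst G₁ G₂ v hp₁.ne, h, min_min_min_comm, min_self]

/-- **Proposition 25.** If the pairs `(a₁, a₁a₂)` and `(a₂, a₁a₂)` are effective pairs of
`G₁`, then for any vertex `v` of `G₂` the two pairs on the edge `(a₁,v)(a₂,v)` of the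
Cartesian product are effective. -/
theorem cartesian_effectivePair_of_effectivePair (G₁ : FIG V₁) (G₂ : FIG V₂)
    (a₁ a₂ : V₁) (hp₁ : G₁.IsPair a₁ a₂) (hp₂ : G₁.IsPair a₂ a₁)
    (h₁ : G₁.EffectivePair a₁ a₂) (h₂ : G₁.EffectivePair a₂ a₁) (v : V₂) :
    (G₁.cartesian G₂).EffectivePair (a₁, v) (a₂, v) ∧
      (G₁.cartesian G₂).EffectivePair (a₂, v) (a₁, v) :=
  ⟨h₁.cartesian G₂ v hp₁ hp₂, h₂.cartesian G₂ v hp₂ hp₁⟩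

end FIG
end
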